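/- Let p be a positive integer, Ω₀ a p×p real symmetric positive definite matrix with Σ₀ = Ω₀⁻¹, and s ∈ ℝ^p with nonnegative entries. Assume Λmax(Σ₀) ≤ M and Λmin(2diag(s) − diag(s)Ω₀diag(s)) ≥ c₀ for some constants M ≥ 1 and c₀ > 0. Let G be the 2p×2p block matrix [[Σ₀, Σ₀ − diag(s)], [Σ₀ − diag(s), Σ₀]]. Then there exists a constant C > 0 depending only on M and c₀ such that Λmin(G) ≥ C; in particular, G is positive definite. -/

import Mathlib

open Matrix Finset
open scoped BigOperators

noncomputable section

/-- Smallest eigenvalue (Rayleigh quotient inf) of a real symmetric matrix. -/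
def lambdaMin {n : Type*} [Fintype n] (A : Matrix n n ℝ) : ℝ :=
  sInf {r | ∃ x : n → ℝ, ∑ i, (x i) ^ 2 = 1 ∧ r = x ⬝ᵥ A.mulVec x}

/-- Largest eigenvalue (Rayleigh quotient sup) of a real symmetric matrix. -/
def lambdaMax {n : Type*} [Fintype n] (A : Matrix n n ℝ) : ℝ :=
  sSup {r | ∃ x : n → ℝ, ∑ i, (x i) ^ 2 = 1 ∧ r = x ⬝ᵥ A.mulVec x}

section Aux

variable {n : Type*} [Fintype n]

lemma rayleigh_bddBelow (A : Matrix n n ℝ) :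
    BddBelow {r | ∃ x : n → ℝ, ∑ i, (x i) ^ 2 = 1 ∧ r = x ⬝ᵥ A.mulVec x} := by
  refine ⟨-(∑ i, ∑ j, |A i j|), ?_⟩
  rintro r ⟨x, hx, rfl⟩
  have hxi : ∀ i, |x i| ≤ 1 := fun i => by
    have h1 : x i ^ 2 ≤ 1 := hx ▸ Finset.single_le_sum
      (fun j _ => sq_nonneg (x j)) (Finset.mem_univ i)
    exact (sq_le_one_iff_abs_le_one (x i)).mp h1
  have habs : |x ⬝ᵥ A.mulVec x| ≤ ∑ i, ∑ j, |A i j| := by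
    refine le_trans (Finset.abs_sum_le_sum_abs _ _) (Finset.sum_le_sum fun i _ => ?_)
    have h2 : |(A.mulVec x) i| ≤ ∑ j, |A i j| := by
      refine le_trans (Finset.abs_sum_le_sum_abs _ _) (Finset.sum_le_sum fun j _ => ?_)
      rw [abs_mul]
      exact mul_le_of_le_one_right (abs_nonneg _) (hxi j)
    calc |x i * (A.mulVec x) i| = |x i| * |(A.mulVec x) i| := abs_mul _ _
      _ ≤ 1 * (∑ j, |A i j|) :=
          mul_le_mul (hxi i) h2 (abs_nonneg _) zero_le_one
      _ = ∑ j, |A i j| := one_mul _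
  linarith [neg_abs_le (x ⬝ᵥ A.mulVec x)]

lemma quad_of_le_lambdaMin {A : Matrix n n ℝ} {c : ℝ}
    (h : c ≤ lambdaMin A) (x : n → ℝ) :
    c * ∑ i, (x i) ^ 2 ≤ x ⬝ᵥ A.mulVec x := by
  set t := ∑ i, (x i) ^ 2 with ht
  have ht0 : 0 ≤ t := Finset.sum_nonneg fun i _ => sq_nonneg _
  rcases eq_or_lt_of_le ht0 with h0 | hpos
  · have hx0 : x = 0 := funext fun i => by
      have := (Finset.sum_eq_zero_iff_of_nonneg (fun j _ => sq_nonneg (x j))).mp h0.symm i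
        (Finset.mem_univ i)
      exact pow_eq_zero_iff two_ne_zero |>.mp this
    simp [hx0, ← h0]
  · set r := Real.sqrt t with hr
    have hrpos : 0 < r := Real.sqrt_pos.mpr hpos
    have hr2 : r ^ 2 = t := Real.sq_sqrt ht0
    have hy : ∑ i, ((r⁻¹ • x) i) ^ 2 = 1 := by
      simp only [Pi.smul_apply, smul_eq_mul, mul_pow, ← Finset.mul_sum]
      rw [← ht, inv_pow, ← hr2]
      field_simp
    have hmem : (r⁻¹ • x) ⬝ᵥ A.mulVec (r⁻¹ • x) ∈
        {r | ∃ x : n → ℝ, ∑ i, (x i) ^ 2 = 1 ∧ r = x ⬝ᵥ A.mulVec x} := ⟨_, hy, rfl⟩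
    have hle : lambdaMin A ≤ (r⁻¹ • x) ⬝ᵥ A.mulVec (r⁻¹ • x) :=
      csInf_le (rayleigh_bddBelow A) hmem
    have hval : (r⁻¹ • x) ⬝ᵥ A.mulVec (r⁻¹ • x) = r⁻¹ * (r⁻¹ * (x ⬝ᵥ A.mulVec x)) := by
      rw [Matrix.mulVec_smul, smul_dotProduct, dotProduct_smul]
      simp [smul_eq_mul]
    have : c ≤ r⁻¹ * (r⁻¹ * (x ⬝ᵥ A.mulVec x)) := le_trans h (hval ▸ hle)
    have h2 : c * (r * r) ≤ x ⬝ᵥ A.mulVec x := by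
      have := mul_le_mul_of_nonneg_left this (le_of_lt (mul_pos hrpos hrpos))
      field_simp at this
      nlinarith [this]
    calc c * t = c * (r * r) := by rw [← hr2]; ring
      _ ≤ _ := h2

lemma le_lambdaMin [DecidableEq n] [Nonempty n]
    {A : Matrix n n ℝ} {c : ℝ}
    (h : ∀ x : n → ℝ, ∑ i, (x i) ^ 2 = 1 → c ≤ x ⬝ᵥ A.mulVec x) : c ≤ lambdaMin A := by
  apply le_csInf
  · obtain ⟨i⟩ := ‹Nonempty n›
    refine ⟨(Pi.single i 1 : n → ℝ) ⬝ᵥ A.mulVec (Pi.single i 1), Pi.single i 1, ?_, rfl⟩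
    simp [Pi.single_apply, apply_ite (· ^ (2:ℕ))]
  · rintro r ⟨x, hx, rfl⟩
    exact h x hx

lemma symm_quad {A : Matrix n n ℝ} (hA : A.IsSymm)
    (x y : n → ℝ) : x ⬝ᵥ A.mulVec y = y ⬝ᵥ A.mulVec x := by
  rw [Matrix.dotProduct_mulVec, ← Matrix.mulVec_transpose, hA.eq, dotProduct_comm]

lemma cauchy_schwarz_posdef {A : Matrix n n ℝ}
    (hA : A.PosDef) (hAs : A.IsSymm) (x y : n → ℝ) :
    (x ⬝ᵥ A.mulVec y) ^ 2 ≤ (x ⬝ᵥ A.mulVec x) * (y ⬝ᵥ A.mulVec y) := by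
  by_cases hy : y = 0
  · simp [hy]
  · have hyy : 0 < y ⬝ᵥ A.mulVec y := by simpa using hA.dotProduct_mulVec_pos hy
    set t := (x ⬝ᵥ A.mulVec y) / (y ⬝ᵥ A.mulVec y) with htdef
    have h0 : 0 ≤ (x - t • y) ⬝ᵥ A.mulVec (x - t • y) := by
      simpa using hA.posSemidef.dotProduct_mulVec_nonneg (x - t • y)
    have hexp : (x - t • y) ⬝ᵥ A.mulVec (x - t • y) =
        x ⬝ᵥ A.mulVec x - t * (x ⬝ᵥ A.mulVec y) - t * (y ⬝ᵥ A.mulVec x)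
          + t * (t * (y ⬝ᵥ A.mulVec y)) := by
      rw [Matrix.mulVec_sub, Matrix.mulVec_smul]
      simp only [sub_dotProduct, dotProduct_sub, smul_dotProduct,
        dotProduct_smul, smul_eq_mul]
      ring
    have hsymm : y ⬝ᵥ A.mulVec x = x ⬝ᵥ A.mulVec y := symm_quad hAs y x
    rw [hexp, hsymm] at h0
    have expand2 : (x ⬝ᵥ A.mulVec x - t * (x ⬝ᵥ A.mulVec y) - t * (x ⬝ᵥ A.mulVec y)
          + t * (t * (y ⬝ᵥ A.mulVec y))) * (y ⬝ᵥ A.mulVec y)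
        = (x ⬝ᵥ A.mulVec x) * (y ⬝ᵥ A.mulVec y) - (x ⬝ᵥ A.mulVec y) ^ 2 := by
      rw [htdef]
      field_simp
      ring
    have h0d := mul_nonneg h0 hyy.le
    rw [expand2] at h0d
    linarith

lemma diag_quad [DecidableEq n] (s : n → ℝ) (x : n → ℝ) :
    x ⬝ᵥ (Matrix.diagonal s).mulVec x = ∑ i, s i * x i ^ 2 := by
  simp only [dotProduct, Matrix.mulVec_diagonal]
  exact Finset.sum_congr rfl fun i _ => by ring

lemma quad_add (A : Matrix n n ℝ) (x y : n → ℝ) :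
    (x + y) ⬝ᵥ A.mulVec (x + y) =
      x ⬝ᵥ A.mulVec x + x ⬝ᵥ A.mulVec y + y ⬝ᵥ A.mulVec x + y ⬝ᵥ A.mulVec y := by
  rw [Matrix.mulVec_add]
  simp only [add_dotProduct, dotProduct_add]
  ring

lemma quad_sub (A : Matrix n n ℝ) (x y : n → ℝ) :
    (x - y) ⬝ᵥ A.mulVec (x - y) =
      x ⬝ᵥ A.mulVec x - x ⬝ᵥ A.mulVec y - y ⬝ᵥ A.mulVec x + y ⬝ᵥ A.mulVec y := by
  rw [Matrix.mulVec_sub]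
  simp only [sub_dotProduct, dotProduct_sub]
  ring

lemma dot_diag_shift [DecidableEq n] (s : n → ℝ) (x w : n → ℝ) :
    x ⬝ᵥ (Matrix.diagonal s).mulVec w = ((Matrix.diagonal s).mulVec x) ⬝ᵥ w := by
  rw [Matrix.dotProduct_mulVec, ← Matrix.mulVec_transpose, Matrix.diagonal_transpose]

lemma Kquad [DecidableEq n] (Om : Matrix n n ℝ) (s : n → ℝ) (x : n → ℝ) :
    x ⬝ᵥ ((2:ℝ) • Matrix.diagonal s
        - Matrix.diagonal s * Om * Matrix.diagonal s).mulVec x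
      = 2 * (x ⬝ᵥ (Matrix.diagonal s).mulVec x)
        - ((Matrix.diagonal s).mulVec x) ⬝ᵥ Om.mulVec ((Matrix.diagonal s).mulVec x) := by
  rw [Matrix.sub_mulVec, dotProduct_sub]
  congr 1
  · rw [Matrix.smul_mulVec, dotProduct_smul, smul_eq_mul]
  · rw [← Matrix.mulVec_mulVec, ← Matrix.mulVec_mulVec, dot_diag_shift]

variable {Om : Matrix n n ℝ} {s : n → ℝ} {c₀ : ℝ}

/-- The diagonal entries are bounded below: `c₀ / 2 ≤ s j`. -/
lemma s_lower [DecidableEq n] (hpd : Om.PosDef)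
    (hK : ∀ x : n → ℝ, c₀ * ∑ i, x i ^ 2 ≤
      x ⬝ᵥ ((2:ℝ) • Matrix.diagonal s - Matrix.diagonal s * Om * Matrix.diagonal s).mulVec x)
    (j : n) : c₀ / 2 ≤ s j := by
  have h := hK (Pi.single j 1)
  rw [Kquad] at h
  have hsum : ∑ i, (Pi.single j 1 : n → ℝ) i ^ 2 = 1 := by
    simp [Pi.single_apply, apply_ite (· ^ (2:ℕ))]
  have hdq : (Pi.single j 1 : n → ℝ) ⬝ᵥ (Matrix.diagonal s).mulVec (Pi.single j 1) = s j := by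
    rw [diag_quad]
    simp [Pi.single_apply, apply_ite (· ^ (2:ℕ)), mul_ite]
  have hnn : 0 ≤ ((Matrix.diagonal s).mulVec (Pi.single j 1)) ⬝ᵥ
      Om.mulVec ((Matrix.diagonal s).mulVec (Pi.single j 1)) := by
    simpa using hpd.posSemidef.dotProduct_mulVec_nonneg ((Matrix.diagonal s).mulVec (Pi.single j 1))
  rw [hsum, hdq] at h
  linarith

/-- Diagonal part of the quadratic form bound: `c₀/2 * |v|² ≤ vᵀ D v`. -/
lemma key_v [DecidableEq n] (hpd : Om.PosDef)
    (hK : ∀ x : n → ℝ, c₀ * ∑ i, x i ^ 2 ≤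
      x ⬝ᵥ ((2:ℝ) • Matrix.diagonal s - Matrix.diagonal s * Om * Matrix.diagonal s).mulVec x)
    (v : n → ℝ) :
    c₀ / 2 * ∑ i, v i ^ 2 ≤ v ⬝ᵥ (Matrix.diagonal s).mulVec v := by
  rw [diag_quad, Finset.mul_sum]
  refine Finset.sum_le_sum fun i _ => ?_
  have := s_lower hpd hK i
  nlinarith [sq_nonneg (v i)]

/-- Main part of the quadratic form bound: `c₀/2 * |u|² ≤ 2 uᵀ Σ u − uᵀ D u`. -/
lemma key_u [DecidableEq n] (hpd : Om.PosDef) (hsym : Om.IsSymm) (hs : ∀ j, 0 ≤ s j)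
    (hK : ∀ x : n → ℝ, c₀ * ∑ i, x i ^ 2 ≤
      x ⬝ᵥ ((2:ℝ) • Matrix.diagonal s - Matrix.diagonal s * Om * Matrix.diagonal s).mulVec x)
    (u : n → ℝ) :
    c₀ / 2 * ∑ i, u i ^ 2 ≤
      2 * (u ⬝ᵥ (Om⁻¹).mulVec u) - u ⬝ᵥ (Matrix.diagonal s).mulVec u := by
  by_cases hu : u = 0
  · simp [hu]
  · have hdet : IsUnit Om.det := isUnit_iff_ne_zero.mpr (ne_of_gt hpd.det_pos)
    have hOS : Om * Om⁻¹ = 1 := Matrix.mul_nonsing_inv _ hdet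
    set a := u ⬝ᵥ (Matrix.diagonal s).mulVec u with ha
    set b := u ⬝ᵥ (Om⁻¹).mulVec u with hb
    set t := ∑ i, u i ^ 2 with htd
    set m := ((Matrix.diagonal s).mulVec u) ⬝ᵥ Om.mulVec ((Matrix.diagonal s).mulVec u) with hm
    have ht0 : 0 ≤ t := Finset.sum_nonneg fun i _ => sq_nonneg _
    have ha0 : 0 ≤ a := by
      rw [ha, diag_quad]
      exact Finset.sum_nonneg fun i _ => mul_nonneg (hs i) (sq_nonneg _)
    have hbpos : 0 < b := by simpa [hb] using hpd.inv.dotProduct_mulVec_pos hu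
    have hKu := hK u
    rw [Kquad] at hKu
    have hmle : m ≤ 2 * a - c₀ * t := by rw [hm, ha, htd]; linarith
    have hcs := cauchy_schwarz_posdef hpd hsym ((Matrix.diagonal s).mulVec u) ((Om⁻¹).mulVec u)
    have h1 : Om.mulVec ((Om⁻¹).mulVec u) = u := by
      rw [Matrix.mulVec_mulVec, hOS, Matrix.one_mulVec]
    have h2 : ((Matrix.diagonal s).mulVec u) ⬝ᵥ Om.mulVec ((Om⁻¹).mulVec u) = a := by
      rw [h1, ha, dotProduct_comm]
    have h3 : ((Om⁻¹).mulVec u) ⬝ᵥ Om.mulVec ((Om⁻¹).mulVec u) = b := by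
      rw [h1, hb, dotProduct_comm]
    rw [h2, h3] at hcs
    have hab : a ^ 2 ≤ (2 * a - c₀ * t) * b :=
      le_trans hcs (mul_le_mul_of_nonneg_right hmle hbpos.le)
    nlinarith [sq_nonneg (2 * b - a), hbpos, hab, ht0]

end Aux

/-- the augmented covariance matrix
`G = [[Σ₀, Σ₀ − diag(s)], [Σ₀ − diag(s), Σ₀]]` has smallest eigenvalue bounded
below by a positive constant depending only on `M` and `c₀`. -/
theorem stmt_3 :
    ∀ M c₀ : ℝ, 1 ≤ M → 0 < c₀ →
      ∃ C > (0 : ℝ),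
        ∀ (p : ℕ), 0 < p →
          ∀ (Om₀ : Matrix (Fin p) (Fin p) ℝ) (s : Fin p → ℝ),
            Om₀.IsSymm → Om₀.PosDef → (∀ j, 0 ≤ s j) →
            lambdaMax (Om₀⁻¹) ≤ M →
            c₀ ≤ lambdaMin
                ((2 : ℝ) • Matrix.diagonal s - Matrix.diagonal s * Om₀ * Matrix.diagonal s) →
            C ≤ lambdaMin (Matrix.fromBlocks (Om₀⁻¹) (Om₀⁻¹ - Matrix.diagonal s)
                  (Om₀⁻¹ - Matrix.diagonal s) (Om₀⁻¹)) ∧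
            (Matrix.fromBlocks (Om₀⁻¹) (Om₀⁻¹ - Matrix.diagonal s)
                (Om₀⁻¹ - Matrix.diagonal s) (Om₀⁻¹)).PosDef := by
  intro M c₀ hM hc₀
  refine ⟨c₀ / 2, by positivity, ?_⟩
  intro p hp Om₀ s hsym hpd hs _hMax hmin
  have hFin : Nonempty (Fin p) := ⟨⟨0, hp⟩⟩
  have hK : ∀ x : Fin p → ℝ, c₀ * ∑ i, x i ^ 2 ≤
      x ⬝ᵥ ((2:ℝ) • Matrix.diagonal s
        - Matrix.diagonal s * Om₀ * Matrix.diagonal s).mulVec x :=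
    fun x => quad_of_le_lambdaMin hmin x
  have hSgsym : (Om₀⁻¹).IsSymm := by
    rw [Matrix.IsSymm, Matrix.transpose_nonsing_inv, hsym.eq]
  have hSgpd : (Om₀⁻¹).PosDef := hpd.inv
  set D := Matrix.diagonal s with hD
  set Sg := Om₀⁻¹ with hSg
  set G := Matrix.fromBlocks Sg (Sg - D) (Sg - D) Sg with hG
  have hquad : ∀ z : (Fin p ⊕ Fin p) → ℝ, c₀ / 2 * ∑ i, z i ^ 2 ≤ z ⬝ᵥ G.mulVec z := by
    intro z
    set x := z ∘ Sum.inl with hx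
    set y := z ∘ Sum.inr with hy
    have hdot : z ⬝ᵥ G.mulVec z =
        x ⬝ᵥ (Sg.mulVec x + (Sg - D).mulVec y)
          + y ⬝ᵥ ((Sg - D).mulVec x + Sg.mulVec y) := by
      rw [hG, Matrix.fromBlocks_mulVec]
      simp [dotProduct, Fintype.sum_sum_type, hx, hy]
    have e1 : x ⬝ᵥ (Sg.mulVec x + (Sg - D).mulVec y)
        = x ⬝ᵥ Sg.mulVec x + x ⬝ᵥ Sg.mulVec y - x ⬝ᵥ D.mulVec y := by
      rw [dotProduct_add, Matrix.sub_mulVec, dotProduct_sub]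
      ring
    have e2 : y ⬝ᵥ ((Sg - D).mulVec x + Sg.mulVec y)
        = y ⬝ᵥ Sg.mulVec x - y ⬝ᵥ D.mulVec x + y ⬝ᵥ Sg.mulVec y := by
      rw [dotProduct_add, Matrix.sub_mulVec, dotProduct_sub]
    have hsS : x ⬝ᵥ Sg.mulVec y = y ⬝ᵥ Sg.mulVec x := symm_quad hSgsym x y
    have hsD : x ⬝ᵥ D.mulVec y = y ⬝ᵥ D.mulVec x :=
      symm_quad (by rw [Matrix.IsSymm, hD, Matrix.diagonal_transpose]) x y
    have hKu := key_u hpd hsym hs hK (x + y)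
    have hKv := key_v hpd hK (x - y)
    rw [← hSg, ← hD] at hKu
    rw [← hD] at hKv
    have qaS := quad_add Sg x y
    have qaD := quad_add D x y
    have qsD := quad_sub D x y
    have hsz : ∑ i, z i ^ 2 = ∑ i, x i ^ 2 + ∑ i, y i ^ 2 := by
      rw [Fintype.sum_sum_type]
      rfl
    have hsum2 : ∑ i, ((x + y) i) ^ 2 + ∑ i, ((x - y) i) ^ 2
        = 2 * (∑ i, x i ^ 2) + 2 * (∑ i, y i ^ 2) := by
      rw [← Finset.sum_add_distrib, Finset.mul_sum, Finset.mul_sum, ← Finset.sum_add_distrib]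
      exact Finset.sum_congr rfl fun i _ => by
        show (x i + y i) ^ 2 + (x i - y i) ^ 2 = 2 * x i ^ 2 + 2 * y i ^ 2
        ring
    have hKuv : c₀ / 2 * (2 * (∑ i, x i ^ 2) + 2 * (∑ i, y i ^ 2)) ≤
        (2 * ((x + y) ⬝ᵥ Sg.mulVec (x + y)) - (x + y) ⬝ᵥ D.mulVec (x + y))
          + ((x - y) ⬝ᵥ D.mulVec (x - y)) := by
      rw [← hsum2, mul_add]
      exact add_le_add hKu hKv
    rw [hdot, e1, e2, hsz]
    rw [qaS, qaD, qsD] at hKuv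
    linarith [hKuv]
  have hNe : Nonempty (Fin p ⊕ Fin p) := ⟨Sum.inl ⟨0, hp⟩⟩
  have hzpos : ∀ z : (Fin p ⊕ Fin p) → ℝ, z ≠ 0 → 0 < ∑ i, z i ^ 2 := by
    intro z hz
    obtain ⟨i, hi⟩ := Function.ne_iff.mp hz
    have h1 : 0 < z i ^ 2 := lt_of_le_of_ne (sq_nonneg _) (Ne.symm (pow_ne_zero 2 hi))
    exact lt_of_lt_of_le h1 (Finset.single_le_sum
      (fun j _ => sq_nonneg (z j)) (Finset.mem_univ i))
  constructor
  · apply le_lambdaMin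
    intro z hz1
    have := hquad z
    rw [hz1, mul_one] at this
    exact this
  · rw [Matrix.posDef_iff_dotProduct_mulVec]; constructor
    · show Gᴴ = G
      have hDh : Dᴴ = D := by
        rw [hD, Matrix.diagonal_conjTranspose]
        congr 1
      have hSh : Sgᴴ = Sg := hSgpd.isHermitian
      rw [hG, Matrix.fromBlocks_conjTranspose, Matrix.conjTranspose_sub, hSh, hDh]
    · intro z hz
      have h1 : star z = z := by
        funext i
        exact star_trivial _
      rw [h1]
      calc (0:ℝ) < c₀ / 2 * ∑ i, z i ^ 2 :=
            mul_pos (by positivity) (hzpos z hz)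
        _ ≤ z ⬝ᵥ G.mulVec z := hquad z
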